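/- arXiv:2309.08224 — 5 statements merged into one kernel-verified Lean document; each statement's English description precedes it below -/
import Mathlib

section
/- Let H : ℝ → ℝ be continuous and coercive and F0 : ℝ → ℝ be continuous, non-increasing and semi-coercive. Then the relaxation coincides with the Godunov action: for every p ∈ ℝ and every q ∈ ℝ with F0(q) = G(q,p), one has F0(q) = (ℜF0)(p). -/
open Set Filter

attribute [local instance] Classical.propDecidable

noncomputable section

/-- `H` is coercive: `H p → +∞` as `|p| → +∞`. -/
def Coercive (H : ℝ → ℝ) : Prop := Tendsto H (cocompact ℝ) atTop

/-- `F` is semi-coercive: `F p → +∞` as `p → -∞`. -/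
def SemiCoercive (F : ℝ → ℝ) : Prop := Tendsto F atBot atTop

/-- Sub-relaxation: `(R̲F)(p) = sup_{q ≥ p} min (F q) (H q)`. -/
def subR (H F : ℝ → ℝ) (p : ℝ) : ℝ := sSup ((fun q => min (F q) (H q)) '' Ici p)

/-- Super-relaxation: `(R̄F)(p) = inf_{q ≤ p} max (F q) (H q)`. -/
def supR (H F : ℝ → ℝ) (p : ℝ) : ℝ := sInf ((fun q => max (F q) (H q)) '' Iic p)

/-- Relaxation operator: `R̲F` where `F ≥ H`, `R̄F` where `F ≤ H`. -/
def relax (H F : ℝ → ℝ) (p : ℝ) : ℝ := if H p ≤ F p then subR H F p else supR H F p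

/-- `p` is a negative characteristic point of `F` relative to `H`. -/
def negChar (H F : ℝ → ℝ) (p : ℝ) : Prop :=
  H p = F p ∧ ∃ ε > 0, ∀ q ∈ Ioo (p - ε) p, H q < H p

/-- `p` is a positive characteristic point of `F` relative to `H`. -/
def posChar (H F : ℝ → ℝ) (p : ℝ) : Prop :=
  H p = F p ∧ ∃ ε > 0, ∀ q ∈ Ioo p (p + ε), H p < H q

/-- The upper point `p⁺ ∈ ℝ ∪ {+∞}` associated with `p` and `H`. -/
def upperPt (H : ℝ → ℝ) (p : ℝ) : EReal :=
  if ∀ ε > 0, ∃ q, p < q ∧ q < p + ε ∧ H q ≤ H p then (p : EReal)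
  else sSup ((fun q : ℝ => (q : EReal)) '' {q : ℝ | p < q ∧ ∀ r ∈ Ioo p q, H p < H r})

/-- The lower point `p⁻` associated with `p` and `H`. -/
def lowerPt (H : ℝ → ℝ) (p : ℝ) : ℝ :=
  if ∀ ε > 0, ∃ q, p - ε < q ∧ q < p ∧ H p ≤ H q then p
  else sInf {q : ℝ | q < p ∧ ∀ r ∈ Ioo q p, H r < H p}

/-- `p` is a positive limiter point of `F`. -/
def posLimiter (H F : ℝ → ℝ) (p : ℝ) : Prop :=
  (p : EReal) < upperPt H p ∧ F p ≤ H p ∧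
    ∀ q : ℝ, H q < H p → F q ≤ H q →
      {r : ℝ | lowerPt H q < r ∧ (r : EReal) < upperPt H q} ∩
        {r : ℝ | p < r ∧ (r : EReal) < upperPt H p} = ∅

/-- `p` is a negative limiter point of `F`. -/
def negLimiter (H F : ℝ → ℝ) (p : ℝ) : Prop :=
  lowerPt H p < p ∧ H p ≤ F p ∧
    ∀ q : ℝ, H q ≤ F q → H p < H q →
      {r : ℝ | lowerPt H q < r ∧ (r : EReal) < upperPt H q} ∩ Ioo (lowerPt H p) p = ∅

/-- The Godunov flux associated with `H`. -/
def godunov (H : ℝ → ℝ) (q p : ℝ) : ℝ :=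
  if p ≤ q then sSup (H '' Icc p q) else sInf (H '' Icc q p)

/-- The lower (set-valued) Godunov semi-flux `G̲(q,p)`, as a subset of the extended reals. -/
def subG (H : ℝ → ℝ) (q p : ℝ) : Set EReal :=
  if q < p then {⊥}
  else if q = p then Iic ((H p : ℝ) : EReal)
  else {((godunov H q p : ℝ) : EReal)}

/-- The upper (set-valued) Godunov semi-flux `Ḡ(q,p)`, as a subset of the extended reals. -/
def supG (H : ℝ → ℝ) (q p : ℝ) : Set EReal :=
  if q < p then {((godunov H q p : ℝ) : EReal)}
  else if q = p then Ici ((H p : ℝ) : EReal)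
  else {⊤}

/-! By compactness the Godunov flux `G(q, p)` equals `H x` for an extremum `x` of `H` between `p`
and `q`. If `p ≤ q` then `F0 p ≥ F0 q = max_{[p,q]} H ≥ H p`, and `sup_{r ≥ p} min (F0 r) (H r)` is
attained at `x`: on `[p, q]` the minimum is at most `H r ≤ H x`, beyond `q` at most `F0 r ≤ F0 q`.
For `q < p` the infimum of `max (F0 r) (H r)` over `r ≤ p` is attained at the minimiser `x` in the
same way, unless `H p ≤ F0 p`; then `F0 p ≤ F0 q ≤ H p` forces `F0 q = F0 p = H p`, which is the
case `q = p` of the first one. -/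

section

variable {H F : ℝ → ℝ} {p q x : ℝ}

lemma godunov_self (H : ℝ → ℝ) (p : ℝ) : godunov H p p = H p := by
  simp [godunov]

lemma godunov_eq_of_isMaxOn (hpq : p ≤ q) (hx : x ∈ Icc p q) (hmax : IsMaxOn H (Icc p q) x) :
    godunov H q p = H x := by
  rw [godunov, if_pos hpq]
  exact IsGreatest.csSup_eq ⟨mem_image_of_mem H hx, by rintro _ ⟨y, hy, rfl⟩; exact hmax hy⟩

lemma godunov_eq_of_isMinOn (hqp : q < p) (hx : x ∈ Icc q p) (hmin : IsMinOn H (Icc q p) x) :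
    godunov H q p = H x := by
  rw [godunov, if_neg hqp.not_ge]
  exact IsLeast.csInf_eq ⟨mem_image_of_mem H hx, by rintro _ ⟨y, hy, rfl⟩; exact hmin hy⟩

lemma subR_eq_of_isMaxOn (hF : Antitone F) (hx : x ∈ Icc p q)
    (hmax : IsMaxOn H (Icc p q) x) (hFq : F q = H x) : subR H F p = H x := by
  refine IsGreatest.csSup_eq ⟨⟨x, hx.1, min_eq_right (hFq ▸ hF hx.2)⟩, ?_⟩
  rintro _ ⟨r, hpr, rfl⟩
  rcases le_total r q with hrq | hqr
  · exact (min_le_right _ _).trans (hmax ⟨hpr, hrq⟩)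
  · exact (min_le_left _ _).trans (hFq ▸ hF hqr)

lemma supR_eq_of_isMinOn (hF : Antitone F) (hx : x ∈ Icc q p)
    (hmin : IsMinOn H (Icc q p) x) (hFq : F q = H x) : supR H F p = H x := by
  refine IsLeast.csInf_eq ⟨⟨x, hx.2, max_eq_right (hFq ▸ hF hx.1)⟩, ?_⟩
  rintro _ ⟨r, hrp, rfl⟩
  rcases le_total q r with hqr | hrq
  · exact (hmin ⟨hqr, hrp⟩).trans (le_max_right _ _)
  · exact (hFq ▸ hF hrq).trans (le_max_left _ _)

lemma relax_eq_of_le_of_eq_godunov (hH : Continuous H) (hF : Antitone F) (hpq : p ≤ q)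
    (h : F q = godunov H q p) : F q = relax H F p := by
  obtain ⟨x, hx, hmax⟩ := isCompact_Icc.exists_isMaxOn (nonempty_Icc.2 hpq) hH.continuousOn
  have hFq : F q = H x := h.trans (godunov_eq_of_isMaxOn hpq hx hmax)
  have hHp : H p ≤ F p := (hmax (left_mem_Icc.2 hpq)).trans (hFq ▸ hF hpq)
  rw [relax, if_pos hHp, subR_eq_of_isMaxOn hF hx hmax hFq, hFq]

end

theorem relax_eq_godunov_action_general (H F0 : ℝ → ℝ)
    (hH : Continuous H)
    (hFa : Antitone F0)
    (p q : ℝ) (h : F0 q = godunov H q p) :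
    F0 q = relax H F0 p := by
  rcases le_or_gt p q with hpq | hqp
  · exact relax_eq_of_le_of_eq_godunov hH hFa hpq h
  obtain ⟨x, hx, hmin⟩ := isCompact_Icc.exists_isMinOn (nonempty_Icc.2 hqp.le) hH.continuousOn
  have hFq : F0 q = H x := h.trans (godunov_eq_of_isMinOn hqp hx hmin)
  by_cases hHp : H p ≤ F0 p
  · have hFq_le : F0 q ≤ H p := hFq ▸ hmin (right_mem_Icc.2 hqp.le)
    have hFqp : F0 q = F0 p := le_antisymm (hFq_le.trans hHp) (hFa hqp.le)
    have hFp : F0 p = H p := le_antisymm (hFqp ▸ hFq_le) hHp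
    rw [hFqp]
    exact relax_eq_of_le_of_eq_godunov hH hFa le_rfl (hFp.trans (godunov_self H p).symm)
  · rw [relax, if_neg hHp, supR_eq_of_isMinOn hFa hx hmin hFq, hFq]

/-- The relaxation operator coincides with Godunov's operator. -/
theorem relax_eq_godunov_action (H F0 : ℝ → ℝ)
    (hH : Continuous H) (hHc : Coercive H)
    (hF : Continuous F0) (hFa : Antitone F0) (hFs : SemiCoercive F0)
    (p q : ℝ) (h : F0 q = godunov H q p) :
    F0 q = relax H F0 p :=
  relax_eq_godunov_action_general H F0 hH hFa p q h
end
end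

section
/- Let H : ℝ → ℝ be continuous and coercive and F0 : ℝ → ℝ be continuous, non-increasing and semi-coercive, and let p ∈ ℝ. Define Q̲ := {q ∈ ℝ : F0(q) ∈ G̲(q,p)} and Q̄ := {q ∈ ℝ : F0(q) ∈ Ḡ(q,p)} (viewing F0(q) as an extended real). Then Q̲ is non-empty and contained in [p, +∞), and F0 takes a single value on Q̲; likewise Q̄ is non-empty and contained in (−∞, p], and F0 takes a single value on Q̄. -/
/-!
Membership `F₀ q ∈ G̲(q,p)` means either `q = p` and `F₀ p ≤ H p`, or `q > p` and
`F₀ q = max_{[p,q]} H`. The running maximum `q ↦ max_{[p,q]} H` is continuous and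
non-decreasing while `F₀` is non-increasing, so `F₀` can only take one value on the solution set;
and if `F₀ p > H p`, coercivity of `H` makes the running maximum overtake `F₀` somewhere to the
right of `p`, so the intermediate value theorem yields a solution. For `Ḡ` the picture is mirrored:
running minima to the left of `p`, and semi-coercivity of `F₀` makes `F₀` overtake `H p`.
-/

open Set Filter

attribute [local instance] Classical.propDecidable

noncomputable section

lemma Antitone.eq_of_monotoneOn {α β : Type*} [LinearOrder α] [PartialOrder β] {f : α → β}
    {s : Set α} (hf : Antitone f) (hs : MonotoneOn f s) {a b : α} (ha : a ∈ s) (hb : b ∈ s) :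
    f a = f b := by
  rcases le_total a b with hab | hba
  · exact le_antisymm (hs ha hb hab) (hf hab)
  · exact le_antisymm (hf hba) (hs hb ha hba)

section

variable {H F : ℝ → ℝ}

lemma coe_mem_subG_iff {q p y : ℝ} :
    (y : EReal) ∈ subG H q p ↔ q = p ∧ y ≤ H p ∨ p < q ∧ y = sSup (H '' Icc p q) := by
  rcases lt_trichotomy q p with hqp | rfl | hpq
  · simp [subG, hqp, hqp.ne, hqp.not_gt]
  · simp [subG]
  · simp [subG, godunov, hpq, hpq.ne', hpq.not_gt, hpq.le]

lemma coe_mem_supG_iff {q p y : ℝ} :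
    (y : EReal) ∈ supG H q p ↔ q = p ∧ H p ≤ y ∨ q < p ∧ y = sInf (H '' Icc q p) := by
  rcases lt_trichotomy q p with hqp | rfl | hpq
  · simp [supG, godunov, hqp, hqp.ne, hqp.not_ge]
  · simp [supG]
  · simp [supG, hpq, hpq.ne', hpq.not_gt]

/- Parametrizing `uIcc p q` by `θ ∈ [0, 1]` turns the moving interval into a fixed compact set. -/
lemma continuous_sSup_image_uIcc (hH : Continuous H) (p : ℝ) :
    Continuous fun q => sSup (H '' uIcc p q) := by
  simp_rw [← segment_eq_uIcc, segment_eq_image, image_image]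
  exact isCompact_Icc.continuous_sSup (by fun_prop)

lemma continuous_sInf_image_uIcc (hH : Continuous H) (p : ℝ) :
    Continuous fun q => sInf (H '' uIcc q p) := by
  simp_rw [← segment_eq_uIcc, segment_eq_image, image_image]
  exact isCompact_Icc.continuous_sInf (by fun_prop)

lemma exists_eq_sSup_image_Icc (hH : Continuous H) (hF : Continuous F) {p x : ℝ} (hpx : p ≤ x)
    (hp : H p ≤ F p) (hx : ∃ y ∈ Icc p x, F x ≤ H y) :
    ∃ q ∈ Icc p x, F q = sSup (H '' Icc p q) := by
  obtain ⟨y, hy, hxy⟩ := hx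
  have hcont : ContinuousOn (fun q => sSup (H '' uIcc p q) - F q) (Icc p x) :=
    ((continuous_sSup_image_uIcc hH p).sub hF).continuousOn
  have hmem : (0 : ℝ) ∈ Icc (sSup (H '' uIcc p p) - F p) (sSup (H '' uIcc p x) - F x) := by
    have hHy : H y ≤ sSup (H '' uIcc p x) :=
      le_csSup (isCompact_uIcc.image hH).bddAbove (mem_image_of_mem H (Icc_subset_uIcc hy))
    simp only [uIcc_self, image_singleton, csSup_singleton]
    constructor <;> linarith
  obtain ⟨q, hq, hq0⟩ := intermediate_value_Icc hpx hcont hmem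
  refine ⟨q, hq, ?_⟩
  dsimp only at hq0
  rw [uIcc_of_le hq.1] at hq0
  linarith

lemma exists_eq_sInf_image_Icc (hH : Continuous H) (hF : Continuous F) {p x : ℝ} (hxp : x ≤ p)
    (hp : F p ≤ H p) (hx : ∃ y ∈ Icc x p, H y ≤ F x) :
    ∃ q ∈ Icc x p, F q = sInf (H '' Icc q p) := by
  obtain ⟨y, hy, hxy⟩ := hx
  have hcont : ContinuousOn (fun q => sInf (H '' uIcc q p) - F q) (Icc x p) :=
    ((continuous_sInf_image_uIcc hH p).sub hF).continuousOn
  have hmem : (0 : ℝ) ∈ Icc (sInf (H '' uIcc x p) - F x) (sInf (H '' uIcc p p) - F p) := by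
    have hHy : sInf (H '' uIcc x p) ≤ H y :=
      csInf_le (isCompact_uIcc.image hH).bddBelow (mem_image_of_mem H (Icc_subset_uIcc hy))
    simp only [uIcc_self, image_singleton, csInf_singleton]
    constructor <;> linarith
  obtain ⟨q, hq, hq0⟩ := intermediate_value_Icc hxp hcont hmem
  refine ⟨q, hq, ?_⟩
  dsimp only at hq0
  rw [uIcc_of_le hq.2] at hq0
  linarith

lemma subG_subset_Ici (p : ℝ) : {q : ℝ | (F q : EReal) ∈ subG H q p} ⊆ Ici p := fun q hq => by
  rcases coe_mem_subG_iff.1 hq with ⟨rfl, -⟩ | ⟨hpq, -⟩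
  exacts [self_mem_Ici, hpq.le]

lemma supG_subset_Iic (p : ℝ) : {q : ℝ | (F q : EReal) ∈ supG H q p} ⊆ Iic p := fun q hq => by
  rcases coe_mem_supG_iff.1 hq with ⟨rfl, -⟩ | ⟨hqp, -⟩
  exacts [self_mem_Iic, hqp.le]

lemma le_sSup_image_Icc_of_coe_mem_subG {q p : ℝ} (hq : (F q : EReal) ∈ subG H q p) :
    F q ≤ sSup (H '' Icc p q) := by
  rcases coe_mem_subG_iff.1 hq with ⟨rfl, hFq⟩ | ⟨-, hFq⟩
  · simpa using hFq
  · exact hFq.le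

lemma sInf_image_Icc_le_of_coe_mem_supG {q p : ℝ} (hq : (F q : EReal) ∈ supG H q p) :
    sInf (H '' Icc q p) ≤ F q := by
  rcases coe_mem_supG_iff.1 hq with ⟨rfl, hFq⟩ | ⟨-, hFq⟩
  · simpa using hFq
  · exact hFq.ge

lemma monotoneOn_subG (hH : Continuous H) (p : ℝ) :
    MonotoneOn F {q : ℝ | (F q : EReal) ∈ subG H q p} := by
  intro a ha b hb hab
  rcases hab.eq_or_lt with rfl | hab
  · rfl
  have hpb : p < b := (subG_subset_Ici p ha).trans_lt hab
  have hFb : F b = sSup (H '' Icc p b) := by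
    simpa [hpb.ne', hpb] using coe_mem_subG_iff.1 hb
  calc F a ≤ sSup (H '' Icc p a) := le_sSup_image_Icc_of_coe_mem_subG ha
    _ ≤ sSup (H '' Icc p b) :=
      csSup_le_csSup (isCompact_Icc.image hH).bddAbove
        ⟨H p, mem_image_of_mem H (left_mem_Icc.2 (subG_subset_Ici p ha))⟩
        (image_mono (Icc_subset_Icc_right hab.le))
    _ = F b := hFb.symm

lemma monotoneOn_supG (hH : Continuous H) (p : ℝ) :
    MonotoneOn F {q : ℝ | (F q : EReal) ∈ supG H q p} := by
  intro a ha b hb hab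
  rcases hab.eq_or_lt with rfl | hab
  · rfl
  have hap : a < p := hab.trans_le (supG_subset_Iic p hb)
  have hFa : F a = sInf (H '' Icc a p) := by
    simpa [hap.ne, hap] using coe_mem_supG_iff.1 ha
  calc F a = sInf (H '' Icc a p) := hFa
    _ ≤ sInf (H '' Icc b p) :=
      csInf_le_csInf (isCompact_Icc.image hH).bddBelow
        ⟨H p, mem_image_of_mem H (right_mem_Icc.2 (supG_subset_Iic p hb))⟩
        (image_mono (Icc_subset_Icc_left hab.le))
    _ ≤ F b := sInf_image_Icc_le_of_coe_mem_supG hb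

lemma subG_nonempty (hH : Continuous H) (hHc : Coercive H) (hF : Continuous F)
    (hFa : Antitone F) (p : ℝ) : {q : ℝ | (F q : EReal) ∈ subG H q p}.Nonempty := by
  rcases le_or_gt (F p) (H p) with hp | hp
  · exact ⟨p, coe_mem_subG_iff.2 (Or.inl ⟨rfl, hp⟩)⟩
  obtain ⟨x, hx, hpx⟩ :=
    (((hHc.mono_left atTop_le_cocompact).eventually (eventually_gt_atTop (F p))).and
      (eventually_ge_atTop p)).exists
  obtain ⟨q, hq, hFq⟩ := exists_eq_sSup_image_Icc hH hF hpx hp.le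
    ⟨x, right_mem_Icc.2 hpx, ((hFa hpx).trans_lt hx).le⟩
  rcases hq.1.eq_or_lt with rfl | hpq
  · exact ⟨_, coe_mem_subG_iff.2 (Or.inl ⟨rfl, by simpa using hFq.le⟩)⟩
  · exact ⟨q, coe_mem_subG_iff.2 (Or.inr ⟨hpq, hFq⟩)⟩

lemma supG_nonempty (hH : Continuous H) (hF : Continuous F) (hFs : SemiCoercive F) (p : ℝ) :
    {q : ℝ | (F q : EReal) ∈ supG H q p}.Nonempty := by
  rcases le_or_gt (H p) (F p) with hp | hp
  · exact ⟨p, coe_mem_supG_iff.2 (Or.inl ⟨rfl, hp⟩)⟩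
  obtain ⟨x, hx, hxp⟩ :=
    ((hFs.eventually (eventually_gt_atTop (H p))).and (eventually_le_atBot p)).exists
  obtain ⟨q, hq, hFq⟩ := exists_eq_sInf_image_Icc hH hF hxp hp.le
    ⟨p, right_mem_Icc.2 hxp, hx.le⟩
  rcases hq.2.eq_or_lt with rfl | hqp
  · exact ⟨_, coe_mem_supG_iff.2 (Or.inl ⟨rfl, by simpa using hFq.ge⟩)⟩
  · exact ⟨q, coe_mem_supG_iff.2 (Or.inr ⟨hqp, hFq⟩)⟩

end

/-- The lower and upper Godunov operators are well defined. -/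
theorem godunov_semi_flux_actions_well_defined (H F0 : ℝ → ℝ)
    (hH : Continuous H) (hHc : Coercive H)
    (hF : Continuous F0) (hFa : Antitone F0) (hFs : SemiCoercive F0) (p : ℝ) :
    ({q : ℝ | (F0 q : EReal) ∈ subG H q p}.Nonempty ∧
     {q : ℝ | (F0 q : EReal) ∈ subG H q p} ⊆ Ici p ∧
     (∀ q₁ ∈ {q : ℝ | (F0 q : EReal) ∈ subG H q p},
      ∀ q₂ ∈ {q : ℝ | (F0 q : EReal) ∈ subG H q p}, F0 q₁ = F0 q₂)) ∧
    ({q : ℝ | (F0 q : EReal) ∈ supG H q p}.Nonempty ∧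
     {q : ℝ | (F0 q : EReal) ∈ supG H q p} ⊆ Iic p ∧
     (∀ q₁ ∈ {q : ℝ | (F0 q : EReal) ∈ supG H q p},
      ∀ q₂ ∈ {q : ℝ | (F0 q : EReal) ∈ supG H q p}, F0 q₁ = F0 q₂)) :=
  ⟨⟨subG_nonempty hH hHc hF hFa p, subG_subset_Ici p,
      fun _ h₁ _ h₂ => hFa.eq_of_monotoneOn (monotoneOn_subG hH p) h₁ h₂⟩,
    ⟨supG_nonempty hH hF hFs p, supG_subset_Iic p,
      fun _ h₁ _ h₂ => hFa.eq_of_monotoneOn (monotoneOn_supG hH p) h₁ h₂⟩⟩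
end
end

section
/- Let H : ℝ → ℝ be continuous and coercive and F0 : ℝ → ℝ be continuous, non-increasing and semi-coercive. Then the actions of the Godunov semi-fluxes on F0 coincide with the semi-relaxations: for every p ∈ ℝ and every q ∈ ℝ with F0(q) ∈ G̲(q,p) one has F0(q) = (R̲F0)(p), and for every q ∈ ℝ with F0(q) ∈ Ḡ(q,p) one has F0(q) = (R̄F0)(p). -/
open Set Filter

attribute [local instance] Classical.propDecidable

noncomputable section

/-- The actions of the Godunov semi-fluxes coincide with the semi-relaxations. -/
theorem semi_relaxations_eq_godunov_semi_flux_actions (H F0 : ℝ → ℝ)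
    (hH : Continuous H) (hHc : Coercive H)
    (hF : Continuous F0) (hFa : Antitone F0) (hFs : SemiCoercive F0) (p q : ℝ) :
    ((F0 q : EReal) ∈ subG H q p → F0 q = subR H F0 p) ∧
    ((F0 q : EReal) ∈ supG H q p → F0 q = supR H F0 p) := by
  constructor
  · intro hmem
    unfold subG at hmem
    rcases lt_trichotomy q p with h | h | h
    · rw [if_pos h] at hmem
      exact absurd (Set.mem_singleton_iff.mp hmem) (EReal.coe_ne_bot _)
    · subst h
      rw [if_neg (lt_irrefl q), if_pos rfl] at hmem
      have hle : F0 q ≤ H q := by exact_mod_cast Set.mem_Iic.mp hmem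
      have hub : ∀ x ∈ (fun r => min (F0 r) (H r)) '' Ici q, x ≤ F0 q := by
        rintro x ⟨r, hr, rfl⟩
        exact (min_le_left _ _).trans (hFa hr)
      have hmem' : F0 q ∈ (fun r => min (F0 r) (H r)) '' Ici q :=
        ⟨q, le_refl q, min_eq_left hle⟩
      exact le_antisymm (le_csSup ⟨F0 q, hub⟩ hmem')
        (csSup_le ⟨_, hmem'⟩ hub)
    · rw [if_neg (not_lt.mpr h.le), if_neg h.ne'] at hmem
      have heq : F0 q = godunov H q p := by exact_mod_cast Set.mem_singleton_iff.mp hmem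
      rw [godunov, if_pos h.le] at heq
      obtain ⟨r, hrmem, hr⟩ := (isCompact_Icc.exists_sSup_image_eq ⟨p, le_refl p, h.le⟩
        hH.continuousOn : ∃ x ∈ Icc p q, sSup (H '' Icc p q) = H x)
      have hbdd : BddAbove (H '' Icc p q) := (isCompact_Icc.image hH).bddAbove
      have hub : ∀ x ∈ (fun r => min (F0 r) (H r)) '' Ici p, x ≤ F0 q := by
        rintro x ⟨s, hs, rfl⟩
        rcases le_or_gt s q with hsq | hsq
        · refine (min_le_right _ _).trans ?_
          rw [heq]
          exact le_csSup hbdd ⟨s, ⟨hs, hsq⟩, rfl⟩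
        · exact (min_le_left _ _).trans (hFa hsq.le)
      have hmem' : F0 q ∈ (fun r => min (F0 r) (H r)) '' Ici p := by
        refine ⟨r, hrmem.1, ?_⟩
        have hHr : H r = F0 q := by rw [heq, hr]
        simp only [hHr]
        exact min_eq_right (hFa hrmem.2)
      exact le_antisymm (le_csSup ⟨F0 q, hub⟩ hmem') (csSup_le ⟨_, hmem'⟩ hub)
  · intro hmem
    unfold supG at hmem
    rcases lt_trichotomy q p with h | h | h
    · rw [if_pos h] at hmem
      have heq : F0 q = godunov H q p := by exact_mod_cast Set.mem_singleton_iff.mp hmem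
      rw [godunov, if_neg (not_le.mpr h)] at heq
      obtain ⟨r, hrmem, hr⟩ := (isCompact_Icc.exists_sInf_image_eq ⟨q, le_refl q, h.le⟩
        hH.continuousOn : ∃ x ∈ Icc q p, sInf (H '' Icc q p) = H x)
      have hbdd : BddBelow (H '' Icc q p) := (isCompact_Icc.image hH).bddBelow
      have hlb : ∀ x ∈ (fun r => max (F0 r) (H r)) '' Iic p, F0 q ≤ x := by
        rintro x ⟨s, hs, rfl⟩
        rcases le_or_gt q s with hqs | hqs
        · refine le_trans ?_ (le_max_right _ _)
          rw [heq]
          exact csInf_le hbdd ⟨s, ⟨hqs, hs⟩, rfl⟩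
        · exact (hFa hqs.le).trans (le_max_left _ _)
      have hmem' : F0 q ∈ (fun r => max (F0 r) (H r)) '' Iic p := by
        refine ⟨r, hrmem.2, ?_⟩
        have hHr : H r = F0 q := by rw [heq, hr]
        simp only [hHr]
        exact max_eq_right (hFa hrmem.1)
      exact le_antisymm (le_csInf ⟨_, hmem'⟩ hlb) (csInf_le ⟨F0 q, hlb⟩ hmem')
    · subst h
      rw [if_neg (lt_irrefl q), if_pos rfl] at hmem
      have hle : H q ≤ F0 q := by exact_mod_cast Set.mem_Ici.mp hmem
      have hlb : ∀ x ∈ (fun r => max (F0 r) (H r)) '' Iic q, F0 q ≤ x := by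
        rintro x ⟨r, hr, rfl⟩
        exact (hFa hr).trans (le_max_left _ _)
      have hmem' : F0 q ∈ (fun r => max (F0 r) (H r)) '' Iic q :=
        ⟨q, le_refl q, max_eq_left hle⟩
      exact le_antisymm (le_csInf ⟨_, hmem'⟩ hlb) (csInf_le ⟨F0 q, hlb⟩ hmem')
    · rw [if_neg (not_lt.mpr h.le), if_neg h.ne'] at hmem
      exact absurd (Set.mem_singleton_iff.mp hmem) (EReal.coe_ne_top _)
end
end

section
/- Let H : ℝ → ℝ be continuous and coercive. (i) For all q, p ∈ ℝ there exists q' ∈ ℝ such that Ḡ(q,q') ∩ G̲(q',p) ≠ ∅; moreover, for every q' ∈ ℝ with Ḡ(q,q') ∩ G̲(q',p) ≠ ∅, this intersection equals the singleton {G(q,p)} (as a subset of the extended reals). (ii) Likewise, for all q, p ∈ ℝ there exists q' ∈ ℝ such that G̲(q,q') ∩ Ḡ(q',p) ≠ ∅, and for every q' with G̲(q,q') ∩ Ḡ(q',p) ≠ ∅ this intersection equals {G(q,p)}. -/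
open Set Filter

attribute [local instance] Classical.propDecidable

noncomputable section

section Aux
variable {H : ℝ → ℝ}

lemma aux_le_sSup (hH : Continuous H) {a b x : ℝ} (hx : x ∈ Icc a b) :
    H x ≤ sSup (H '' Icc a b) :=
  le_csSup ((isCompact_Icc.image hH).bddAbove) ⟨x, hx, rfl⟩

lemma aux_sInf_le (hH : Continuous H) {a b x : ℝ} (hx : x ∈ Icc a b) :
    sInf (H '' Icc a b) ≤ H x :=
  csInf_le ((isCompact_Icc.image hH).bddBelow) ⟨x, hx, rfl⟩

lemma aux_sSup_mono (hH : Continuous H) {a b a' b' : ℝ} (hab : a ≤ b) (ha : a' ≤ a)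
    (hb : b ≤ b') : sSup (H '' Icc a b) ≤ sSup (H '' Icc a' b') :=
  csSup_le_csSup ((isCompact_Icc.image hH).bddAbove) ((nonempty_Icc.2 hab).image H)
    (image_mono (Icc_subset_Icc ha hb))

lemma aux_sInf_mono (hH : Continuous H) {a b a' b' : ℝ} (hab : a ≤ b) (ha : a' ≤ a)
    (hb : b ≤ b') : sInf (H '' Icc a' b') ≤ sInf (H '' Icc a b) :=
  csInf_le_csInf ((isCompact_Icc.image hH).bddBelow) ((nonempty_Icc.2 hab).image H)
    (image_mono (Icc_subset_Icc ha hb))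

lemma god_self (p : ℝ) : godunov H p p = H p := by
  simp [godunov, Icc_self]

lemma god_sup {q p : ℝ} (h : p ≤ q) : godunov H q p = sSup (H '' Icc p q) := if_pos h

lemma god_inf {q p : ℝ} (h : q < p) : godunov H q p = sInf (H '' Icc q p) := if_neg (not_le.2 h)

lemma supG_lt {q q' : ℝ} (h : q < q') :
    supG H q q' = {((godunov H q q' : ℝ) : EReal)} := if_pos h

lemma supG_self (q : ℝ) : supG H q q = Ici ((H q : ℝ) : EReal) := by
  simp [supG]

lemma supG_gt {q q' : ℝ} (h : q' < q) : supG H q q' = {⊤} := by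
  rw [supG, if_neg h.not_gt, if_neg h.ne']

lemma subG_lt {q p : ℝ} (h : q < p) : subG H q p = {⊥} := if_pos h

lemma subG_self (p : ℝ) : subG H p p = Iic ((H p : ℝ) : EReal) := by
  simp [subG]

lemma subG_gt {q p : ℝ} (h : p < q) :
    subG H q p = {((godunov H q p : ℝ) : EReal)} := by
  rw [subG, if_neg h.not_gt, if_neg h.ne']

/-- Key equality, case `q < q'`, `p < q'` for the first composition. -/
lemma key1 (hH : Continuous H) {q p q' : ℝ} (h1 : q < q') (h2 : p < q')
    (he : godunov H q q' = godunov H q' p) : godunov H q q' = godunov H q p := by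
  rw [god_inf h1] at he ⊢
  rw [god_sup h2.le] at he
  rcases le_or_gt p q with hpq | hqp
  · rw [god_sup hpq]
    refine le_antisymm ?_ ?_
    · calc sInf (H '' Icc q q') ≤ H q := aux_sInf_le hH ⟨le_refl q, h1.le⟩
        _ ≤ sSup (H '' Icc p q) := aux_le_sSup hH ⟨hpq, le_refl q⟩
    · rw [he]; exact aux_sSup_mono hH hpq (le_refl p) h1.le
  · rw [god_inf hqp]
    refine le_antisymm ?_ ?_
    · exact aux_sInf_mono hH hqp.le (le_refl q) h2.le
    · calc sInf (H '' Icc q p) ≤ H p := aux_sInf_le hH ⟨hqp.le, le_refl p⟩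
        _ ≤ sSup (H '' Icc p q') := aux_le_sSup hH ⟨le_refl p, h2.le⟩
        _ = sInf (H '' Icc q q') := he.symm

/-- Key equality, case `q' < q`, `q' < p` for the second composition. -/
lemma key2 (hH : Continuous H) {q p q' : ℝ} (h1 : q' < q) (h2 : q' < p)
    (he : godunov H q q' = godunov H q' p) : godunov H q q' = godunov H q p := by
  rw [god_sup h1.le] at he ⊢
  rw [god_inf h2] at he
  rcases le_or_gt p q with hpq | hqp
  · rw [god_sup hpq]
    refine le_antisymm ?_ ?_
    · rw [he]
      calc sInf (H '' Icc q' p) ≤ H p := aux_sInf_le hH ⟨h2.le, le_refl p⟩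
        _ ≤ sSup (H '' Icc p q) := aux_le_sSup hH ⟨le_refl p, hpq⟩
    · exact aux_sSup_mono hH hpq h2.le (le_refl q)
  · rw [god_inf hqp]
    refine le_antisymm ?_ ?_
    · rw [he]; exact aux_sInf_mono hH hqp.le h1.le (le_refl p)
    · calc sInf (H '' Icc q p) ≤ H q := aux_sInf_le hH ⟨le_refl q, hqp.le⟩
        _ ≤ sSup (H '' Icc q' q) := aux_le_sSup hH ⟨h1.le, le_refl q⟩

/-- First composition: intersection is the Godunov singleton whenever nonempty. -/
lemma inter1 (hH : Continuous H) (q p q' : ℝ)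
    (hne : (supG H q q' ∩ subG H q' p).Nonempty) :
    supG H q q' ∩ subG H q' p = {((godunov H q p : ℝ) : EReal)} := by
  obtain ⟨x, hx1, hx2⟩ := hne
  rcases lt_trichotomy q q' with h1 | h1 | h1
  · rcases lt_trichotomy q' p with h2 | h2 | h2
    · exfalso
      rw [supG_lt h1, mem_singleton_iff] at hx1
      rw [subG_lt h2, mem_singleton_iff] at hx2
      rw [hx1] at hx2; simp at hx2
    · subst h2
      rw [supG_lt h1, subG_self]
      exact inter_eq_self_of_subset_left (singleton_subset_iff.2
        (EReal.coe_le_coe_iff.2 (by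
          rw [god_inf h1]; exact aux_sInf_le hH ⟨h1.le, le_refl q'⟩)))
    · rw [supG_lt h1, mem_singleton_iff] at hx1
      rw [subG_gt h2, mem_singleton_iff] at hx2
      have he : godunov H q q' = godunov H q' p := by
        rw [hx1] at hx2; exact_mod_cast hx2
      rw [supG_lt h1, subG_gt h2, ← key1 hH h1 h2 he, ← he, inter_self]
  · subst h1
    rcases lt_trichotomy q p with h2 | h2 | h2
    · exfalso
      rw [supG_self, mem_Ici] at hx1
      rw [subG_lt h2, mem_singleton_iff] at hx2
      rw [hx2] at hx1; simp at hx1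
    · subst h2
      rw [supG_self, subG_self, Ici_inter_Iic, Icc_self, god_self]
    · rw [supG_self, subG_gt h2]
      exact inter_eq_self_of_subset_right (singleton_subset_iff.2
        (EReal.coe_le_coe_iff.2 (by
          rw [god_sup h2.le]; exact aux_le_sSup hH ⟨h2.le, le_refl q⟩)))
  · exfalso
    rw [supG_gt h1, mem_singleton_iff] at hx1
    subst hx1
    rcases lt_trichotomy q' p with h2 | h2 | h2
    · rw [subG_lt h2, mem_singleton_iff] at hx2; simp at hx2
    · subst h2; rw [subG_self, mem_Iic] at hx2; simp at hx2
    · rw [subG_gt h2, mem_singleton_iff] at hx2; simp at hx2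

/-- Second composition: intersection is the Godunov singleton whenever nonempty. -/
lemma inter2 (hH : Continuous H) (q p q' : ℝ)
    (hne : (subG H q q' ∩ supG H q' p).Nonempty) :
    subG H q q' ∩ supG H q' p = {((godunov H q p : ℝ) : EReal)} := by
  obtain ⟨x, hx1, hx2⟩ := hne
  rcases lt_trichotomy q' q with h1 | h1 | h1
  · rcases lt_trichotomy q' p with h2 | h2 | h2
    · rw [subG_gt h1, mem_singleton_iff] at hx1
      rw [supG_lt h2, mem_singleton_iff] at hx2
      have he : godunov H q q' = godunov H q' p := by
        rw [hx1] at hx2; exact_mod_cast hx2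
      rw [subG_gt h1, supG_lt h2, ← key2 hH h1 h2 he, ← he, inter_self]
    · subst h2
      rw [subG_gt h1, supG_self]
      exact inter_eq_self_of_subset_left (singleton_subset_iff.2
        (EReal.coe_le_coe_iff.2 (by
          rw [god_sup h1.le]; exact aux_le_sSup hH ⟨le_refl q', h1.le⟩)))
    · exfalso
      rw [subG_gt h1, mem_singleton_iff] at hx1
      rw [supG_gt h2, mem_singleton_iff] at hx2
      rw [hx1] at hx2; simp at hx2
  · subst h1
    rcases lt_trichotomy q' p with h2 | h2 | h2
    · rw [subG_self, supG_lt h2]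
      exact inter_eq_self_of_subset_right (singleton_subset_iff.2
        (EReal.coe_le_coe_iff.2 (by
          rw [god_inf h2]; exact aux_sInf_le hH ⟨le_refl q', h2.le⟩)))
    · subst h2
      rw [subG_self, supG_self, inter_comm, Ici_inter_Iic, Icc_self, god_self]
    · exfalso
      rw [subG_self, mem_Iic] at hx1
      rw [supG_gt h2, mem_singleton_iff] at hx2
      rw [hx2] at hx1; simp at hx1
  · exfalso
    rw [subG_lt h1, mem_singleton_iff] at hx1
    subst hx1
    rcases lt_trichotomy q' p with h2 | h2 | h2
    · rw [supG_lt h2, mem_singleton_iff] at hx2; simp at hx2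
    · subst h2; rw [supG_self, mem_Ici] at hx2; simp at hx2
    · rw [supG_gt h2, mem_singleton_iff] at hx2; simp at hx2

end Aux

/-- Key composition result for the Godunov semi-fluxes. -/
theorem godunov_semi_flux_composition (H : ℝ → ℝ)
    (hH : Continuous H) (hHc : Coercive H) :
    (∀ q p : ℝ, ∃ q' : ℝ, (supG H q q' ∩ subG H q' p).Nonempty) ∧
    (∀ q p q' : ℝ, (supG H q q' ∩ subG H q' p).Nonempty →
      supG H q q' ∩ subG H q' p = {((godunov H q p : ℝ) : EReal)}) ∧
    (∀ q p : ℝ, ∃ q' : ℝ, (subG H q q' ∩ supG H q' p).Nonempty) ∧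
    (∀ q p q' : ℝ, (subG H q q' ∩ supG H q' p).Nonempty →
      subG H q q' ∩ supG H q' p = {((godunov H q p : ℝ) : EReal)}) := by
  refine ⟨?_, fun q p q' => inter1 hH q p q', ?_, fun q p q' => inter2 hH q p q'⟩
  · intro q p
    rcases lt_trichotomy p q with h | h | h
    · refine ⟨q, ((godunov H q p : ℝ) : EReal), ?_, ?_⟩
      · rw [supG_self, mem_Ici]
        refine EReal.coe_le_coe_iff.2 ?_
        rw [god_sup h.le]
        exact aux_le_sSup hH ⟨h.le, le_refl q⟩
      · rw [subG_gt h]; rfl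
    · subst h
      exact ⟨p, ((H p : ℝ) : EReal), by rw [supG_self]; exact self_mem_Ici,
        by rw [subG_self]; exact self_mem_Iic⟩
    · refine ⟨p, ((godunov H q p : ℝ) : EReal), ?_, ?_⟩
      · rw [supG_lt h]; rfl
      · rw [subG_self, mem_Iic]
        refine EReal.coe_le_coe_iff.2 ?_
        rw [god_inf h]
        exact aux_sInf_le hH ⟨h.le, le_refl p⟩
  · intro q p
    rcases lt_trichotomy p q with h | h | h
    · refine ⟨p, ((godunov H q p : ℝ) : EReal), ?_, ?_⟩
      · rw [subG_gt h]; rfl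
      · rw [supG_self, mem_Ici]
        refine EReal.coe_le_coe_iff.2 ?_
        rw [god_sup h.le]
        exact aux_le_sSup hH ⟨le_refl p, h.le⟩
    · subst h
      exact ⟨p, ((H p : ℝ) : EReal), by rw [subG_self]; exact self_mem_Iic,
        by rw [supG_self]; exact self_mem_Ici⟩
    · refine ⟨q, ((godunov H q p : ℝ) : EReal), ?_, ?_⟩
      · rw [subG_self, mem_Iic]
        refine EReal.coe_le_coe_iff.2 ?_
        rw [god_inf h]
        exact aux_sInf_le hH ⟨le_refl q, h.le⟩
      · rw [supG_lt h]; rfl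
end
end

section
/- Let H : ℝ → ℝ be continuous and coercive and F0 : ℝ → ℝ be continuous, non-increasing and semi-coercive. Then for every p ∈ ℝ, the two-sided inequality (R̲F0)(p) ≤ H(p) ≤ (R̄F0)(p) holds if and only if H(p) = (ℜF0)(p); in other words, a linear function u(t,x) = p·x − H(p)·t is a weak solution of the boundary-value problem exactly when p belongs to the germ 𝒢 := {q ∈ ℝ : H(q) = (ℜF0)(q)}. -/
open Set Filter

attribute [local instance] Classical.propDecidable

noncomputable section

/-- Relation with the germ: `R̲F0(p) ≤ H(p) ≤ R̄F0(p)` iff `H(p) = ℜF0(p)`. -/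
theorem germ_characterization (H F0 : ℝ → ℝ)
    (hH : Continuous H) (hHc : Coercive H)
    (hF : Continuous F0) (hFa : Antitone F0) (hFs : SemiCoercive F0) (p : ℝ) :
    (subR H F0 p ≤ H p ∧ H p ≤ supR H F0 p) ↔ H p = relax H F0 p := by
  have hmem1 : min (F0 p) (H p) ∈ (fun q => min (F0 q) (H q)) '' Ici p :=
    ⟨p, self_mem_Ici, rfl⟩
  have hbdd1 : ∀ x ∈ (fun q => min (F0 q) (H q)) '' Ici p, x ≤ F0 p := by
    rintro x ⟨q, hq, rfl⟩
    exact (min_le_left _ _).trans (hFa hq)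
  have h1 : subR H F0 p ≤ F0 p := csSup_le ⟨_, hmem1⟩ hbdd1
  have h2 : min (F0 p) (H p) ≤ subR H F0 p :=
    le_csSup ⟨F0 p, fun x hx => hbdd1 x hx⟩ hmem1
  have hmem2 : max (F0 p) (H p) ∈ (fun q => max (F0 q) (H q)) '' Iic p :=
    ⟨p, self_mem_Iic, rfl⟩
  have hbdd2 : ∀ x ∈ (fun q => max (F0 q) (H q)) '' Iic p, F0 p ≤ x := by
    rintro x ⟨q, hq, rfl⟩
    exact (hFa hq).trans (le_max_left _ _)
  have h3 : F0 p ≤ supR H F0 p := le_csInf ⟨_, hmem2⟩ hbdd2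
  have h4 : supR H F0 p ≤ max (F0 p) (H p) :=
    csInf_le ⟨F0 p, fun x hx => hbdd2 x hx⟩ hmem2
  unfold relax
  by_cases h : H p ≤ F0 p
  · simp only [h, if_true]
    rw [min_eq_right h] at h2
    exact ⟨fun ⟨ha, _⟩ => le_antisymm h2 ha, fun he => ⟨he.ge, h.trans h3⟩⟩
  · simp only [h, if_false]
    have h' : F0 p ≤ H p := (not_le.mp h).le
    rw [max_eq_right h'] at h4
    exact ⟨fun ⟨_, hb⟩ => le_antisymm hb h4, fun he => ⟨h1.trans h', he.le⟩⟩
end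
end
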